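/- arXiv:2011.05085 — 2 statements merged into one kernel-verified Lean document; each statement's English description precedes it below -/
import Mathlib

section
/- Let G be the direct union of graphs G₀ and G₁ at vertices v₀ ∈ V₀ and v₁ ∈ V₁ (identifying v₀ and v₁), and let c_b be the minimum cut weight of G_b for b = 0,1. If c₀ = c₁ then cdim(G) = cdim(G₀) + cdim(G₁), and if c_b < c_{1-b} then cdim(G) = cdim(G_b). -/
open Finset

/-- Two finite sets overlap if their intersection and both differences are nonempty. -/
def overlap {V : Type*} [DecidableEq V] (X Y : Finset V) : Prop :=
  (X ∩ Y).Nonempty ∧ (X \ Y).Nonempty ∧ (Y \ X).Nonempty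

/-- Two shores cross if all four corner sets are nonempty. -/
def crossing {V : Type*} [DecidableEq V] [Fintype V] (X Y : Finset V) : Prop :=
  (X ∩ Y).Nonempty ∧ (X \ Y).Nonempty ∧ (Y \ X).Nonempty ∧ (Xᶜ ∩ Yᶜ).Nonempty

/-- X is the shore of a cut: nonempty and proper. -/
def isCutShore {V : Type*} [Fintype V] (X : Finset V) : Prop :=
  X.Nonempty ∧ X ≠ Finset.univ

/-- The weight of the cut Δ(X) in the weighted graph with (symmetric) weights w. -/
noncomputable def cutWeight {V : Type*} [DecidableEq V] [Fintype V]
    (w : V → V → ℝ) (X : Finset V) : ℝ :=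
  (1/2) * ∑ p : V × V,
    if (p.1 ∈ X ∧ p.2 ∉ X) ∨ (p.2 ∈ X ∧ p.1 ∉ X) then w p.1 p.2 else 0

/-- Δ(X) is a minimum cut. -/
def isMinCut {V : Type*} [DecidableEq V] [Fintype V] (w : V → V → ℝ) (X : Finset V) : Prop :=
  isCutShore X ∧ ∀ Y : Finset V, isCutShore Y → cutWeight w X ≤ cutWeight w Y

/-- The characteristic vector of the cut Δ(X) among the edges (pairs of positive weight). -/
noncomputable def cutVec {V : Type*} [DecidableEq V] [Fintype V]
    (w : V → V → ℝ) (X : Finset V) : V × V → ℝ :=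
  fun p => if (((p.1 ∈ X ∧ p.2 ∉ X) ∨ (p.2 ∈ X ∧ p.1 ∉ X)) ∧ 0 < w p.1 p.2) then 1 else 0

/-- The cut dimension of a weighted graph. -/
noncomputable def cdim {V : Type*} [DecidableEq V] [Fintype V] (w : V → V → ℝ) : ℕ :=
  Module.finrank ℝ (Submodule.span ℝ
    {v : V × V → ℝ | ∃ X : Finset V, isMinCut w X ∧ v = cutVec w X})

/-- The vertex set of the direct union of `G₀` and `G₁` at `v₀, v₁`:
the two special vertices are identified to the single new vertex `none`. -/
abbrev duVertex (V₀ V₁ : Type*) (v₀ : V₀) (v₁ : V₁) :=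
  Option ({x : V₀ // x ≠ v₀} ⊕ {y : V₁ // y ≠ v₁})

/-- The weight function of the direct union of `(V₀, w₀)` and `(V₁, w₁)` at `v₀, v₁`. -/
def duWeight {V₀ V₁ : Type*} (w₀ : V₀ → V₀ → ℝ) (w₁ : V₁ → V₁ → ℝ) (v₀ : V₀) (v₁ : V₁) :
    duVertex V₀ V₁ v₀ v₁ → duVertex V₀ V₁ v₀ v₁ → ℝ
  | none, none => 0
  | none, some (Sum.inl x) => w₀ v₀ x.1
  | none, some (Sum.inr y) => w₁ v₁ y.1
  | some (Sum.inl x), none => w₀ x.1 v₀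
  | some (Sum.inr y), none => w₁ y.1 v₁
  | some (Sum.inl x), some (Sum.inl x') => w₀ x.1 x'.1
  | some (Sum.inr y), some (Sum.inr y') => w₁ y.1 y'.1
  | some (Sum.inl _), some (Sum.inr _) => 0
  | some (Sum.inr _), some (Sum.inl _) => 0

/-!
A cut `Y` of the direct union restricts to cuts `A` of `G₀` and `B` of `G₁` (either of which may be
trivial), and both the weight and the characteristic vector of `Y` are the sums of those of `A` and
`B`, the vectors being extended by zero. Hence the minimum cut weight of the union is
`min c₀ c₁`, and every nontrivial restriction of a minimum cut is a minimum cut of its side of that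
weight. Conversely, pulling back along the retraction that collapses the other side lifts a minimum
cut of the lighter side to one of the union with the same vector. So the minimum cuts of the union
span the image of those of the lighter side, or the sum of both images when `c₀ = c₁`; that sum is
direct because the two edge sets meet only on the diagonal, where cut vectors vanish.
-/

open Function

lemma eq_empty_or_eq_univ_or_isCutShore {V : Type*} [Fintype V] (X : Finset V) :
    X = ∅ ∨ X = univ ∨ isCutShore X := by
  rw [isCutShore, ← Finset.not_nonempty_iff_eq_empty]
  tauto

section Cuts

variable {V : Type*} [DecidableEq V]

/-- `cutWeight` and `cutVec` both come from this for `h = id` and `h = 1_{(0, ∞)}`. -/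
noncomputable def cutFun (h : ℝ → ℝ) (w : V → V → ℝ) (X : Finset V) : V × V → ℝ :=
  fun p => if (p.1 ∈ X ∧ p.2 ∉ X) ∨ (p.2 ∈ X ∧ p.1 ∉ X) then h (w p.1 p.2) else 0

lemma cutFun_diag (h : ℝ → ℝ) (w : V → V → ℝ) (X : Finset V) (a : V) :
    cutFun h w X (a, a) = 0 :=
  if_neg (by tauto)

variable [Fintype V]

lemma cutWeight_eq_sum_cutFun (w : V → V → ℝ) (X : Finset V) :
    cutWeight w X = 1 / 2 * ∑ p, cutFun id w X p :=
  rfl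

lemma cutVec_eq_cutFun (w : V → V → ℝ) (X : Finset V) :
    cutVec w X = cutFun (fun t => if 0 < t then 1 else 0) w X := by
  ext p
  simp only [cutVec, cutFun, ite_and]

lemma cutFun_of_eq_empty_or_eq_univ (h : ℝ → ℝ) (w : V → V → ℝ) {X : Finset V}
    (hX : X = ∅ ∨ X = univ) : cutFun h w X = 0 := by
  ext p
  rcases hX with rfl | rfl <;> simp [cutFun]

lemma cutVec_of_eq_empty_or_eq_univ (w : V → V → ℝ) {X : Finset V} (hX : X = ∅ ∨ X = univ) :
    cutVec w X = 0 := by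
  rw [cutVec_eq_cutFun, cutFun_of_eq_empty_or_eq_univ _ _ hX]

lemma cutWeight_of_eq_empty_or_eq_univ (w : V → V → ℝ) {X : Finset V} (hX : X = ∅ ∨ X = univ) :
    cutWeight w X = 0 := by
  rw [cutWeight_eq_sum_cutFun, cutFun_of_eq_empty_or_eq_univ _ _ hX]
  simp

lemma cutWeight_nonneg {w : V → V → ℝ} (hw : ∀ i j, 0 ≤ w i j) (X : Finset V) :
    0 ≤ cutWeight w X := by
  refine mul_nonneg (by norm_num) (Finset.sum_nonneg fun p _ => ?_)
  split <;> simp [hw]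

def cutWeights (w : V → V → ℝ) : Set ℝ :=
  {c | ∃ X : Finset V, isCutShore X ∧ cutWeight w X = c}

lemma isMinCut_iff_of_isLeast {w : V → V → ℝ} {c : ℝ} (hc : IsLeast (cutWeights w) c)
    (X : Finset V) : isMinCut w X ↔ isCutShore X ∧ cutWeight w X = c := by
  obtain ⟨⟨Z, hZ, rfl⟩, hlb⟩ := hc
  refine ⟨fun hX => ⟨hX.1, le_antisymm (hX.2 Z hZ) (hlb ⟨X, hX.1, rfl⟩)⟩, ?_⟩
  rintro ⟨hX, hXc⟩
  exact ⟨hX, fun Y hY => hXc ▸ hlb ⟨Y, hY, rfl⟩⟩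

noncomputable def minCutSpan (w : V → V → ℝ) : Submodule ℝ (V × V → ℝ) :=
  Submodule.span ℝ {v | ∃ X : Finset V, isMinCut w X ∧ v = cutVec w X}

lemma cdim_eq_finrank_minCutSpan (w : V → V → ℝ) : cdim w = Module.finrank ℝ (minCutSpan w) :=
  rfl

lemma cutVec_mem_minCutSpan {w : V → V → ℝ} {X : Finset V} (hX : isMinCut w X) :
    cutVec w X ∈ minCutSpan w :=
  Submodule.subset_span ⟨X, hX, rfl⟩

lemma apply_diag_eq_zero_of_mem_minCutSpan {w : V → V → ℝ} {f : V × V → ℝ}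
    (hf : f ∈ minCutSpan w) (a : V) : f (a, a) = 0 := by
  induction hf using Submodule.span_induction with
  | mem x hx =>
    obtain ⟨X, -, rfl⟩ := hx
    rw [cutVec_eq_cutFun, cutFun_diag]
  | zero => rfl
  | add x y _ _ hx hy => simp [hx, hy]
  | smul r x _ hx => simp [hx]

end Cuts

section ComapShore

variable {U V W : Type*} [Fintype V] [DecidableEq W]

def comapShore (e : V → W) (Y : Finset W) : Finset V :=
  univ.filter fun a => e a ∈ Y

@[simp]
lemma mem_comapShore {e : V → W} {Y : Finset W} {a : V} : a ∈ comapShore e Y ↔ e a ∈ Y := by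
  simp [comapShore]

lemma comapShore_comapShore [Fintype U] [DecidableEq V] (e : U → V) (r : V → W) (X : Finset W) :
    comapShore e (comapShore r X) = comapShore (r ∘ e) X := by
  ext; simp

lemma comapShore_id [DecidableEq V] (X : Finset V) : comapShore id X = X := by
  ext; simp

lemma comapShore_const (c : W) (X : Finset W) :
    comapShore (fun _ : V => c) X = ∅ ∨ comapShore (fun _ : V => c) X = univ := by
  by_cases hc : c ∈ X
  · exact Or.inr (by ext; simp [hc])
  · exact Or.inl (by ext; simp [hc])

lemma isCutShore_comapShore_of_mem_of_notMem {e : V → W} {Y : Finset W} {a b : V}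
    (ha : e a ∈ Y) (hb : e b ∉ Y) : isCutShore (comapShore e Y) :=
  ⟨⟨a, mem_comapShore.mpr ha⟩, fun h => hb (mem_comapShore.mp (h ▸ mem_univ b))⟩

lemma isCutShore_comapShore [Fintype W] {r : V → W} (hr : Surjective r) {X : Finset W}
    (hX : isCutShore X) : isCutShore (comapShore r X) := by
  obtain ⟨⟨x, hx⟩, hXu⟩ := hX
  refine ⟨?_, fun h => hXu ?_⟩
  · obtain ⟨a, rfl⟩ := hr x
    exact ⟨a, mem_comapShore.mpr hx⟩
  · ext y
    obtain ⟨a, rfl⟩ := hr y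
    simpa using Finset.ext_iff.mp h a

lemma cutFun_comp_map [DecidableEq V] (h : ℝ → ℝ) {w : W → W → ℝ} {w' : V → V → ℝ} {e : V → W}
    (hw : ∀ a b, a ≠ b → w (e a) (e b) = w' a b) (Y : Finset W) :
    cutFun h w Y ∘ Prod.map e e = cutFun h w' (comapShore e Y) := by
  ext ⟨a, b⟩
  rcases eq_or_ne a b with rfl | hab
  · exact (cutFun_diag h w Y (e a)).trans (cutFun_diag h w' _ a).symm
  · simp [cutFun, hw a b hab]

end ComapShore

section ExtendEdges

variable {V W : Type*} {e : V → W}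

noncomputable def extendEdges (e : V → W) : (V × V → ℝ) →ₗ[ℝ] (W × W → ℝ) :=
  ExtendByZero.linearMap ℝ (Prod.map e e)

lemma extendEdges_apply_of_notMem (f : V × V → ℝ) {p : W × W}
    (hp : p ∉ Set.range e ×ˢ Set.range e) : extendEdges e f p = 0 :=
  extend_apply' _ _ _ fun ⟨q, hq⟩ => hp (hq ▸ ⟨⟨q.1, rfl⟩, ⟨q.2, rfl⟩⟩)

variable (he : Injective e)
include he

lemma extendEdges_injective : Injective (extendEdges e) :=
  extend_injective (he.prodMap he) (0 : W × W → ℝ)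

lemma extendEdges_apply_map (f : V × V → ℝ) (a b : V) : extendEdges e f (e a, e b) = f (a, b) :=
  (he.prodMap he).extend_apply f 0 (a, b)

lemma extendEdges_comp_map (F : W × W → ℝ) :
    extendEdges e (F ∘ Prod.map e e) = (Set.range e ×ˢ Set.range e).indicator F := by
  ext ⟨P, Q⟩
  by_cases hPQ : (P, Q) ∈ Set.range e ×ˢ Set.range e
  · obtain ⟨⟨a, rfl⟩, ⟨b, rfl⟩⟩ := hPQ
    rw [extendEdges_apply_map he, Set.indicator_of_mem (by simp)]
    rfl
  · rw [Set.indicator_of_notMem hPQ, extendEdges_apply_of_notMem _ hPQ]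

lemma sum_extendEdges [Fintype V] [Fintype W] (f : V × V → ℝ) :
    ∑ p, extendEdges e f p = ∑ p, f p := by
  refine (Fintype.sum_of_injective _ (he.prodMap he) _ _ (fun p hp => ?_)
    (fun p => (extendEdges_apply_map he f p.1 p.2).symm)).symm
  exact extend_apply' _ _ _ hp

lemma finrank_map_extendEdges (S : Submodule ℝ (V × V → ℝ)) :
    Module.finrank ℝ (S.map (extendEdges e)) = Module.finrank ℝ S :=
  (LinearEquiv.finrank_eq (Submodule.equivMapOfInjective _ (extendEdges_injective he) S)).symm

end ExtendEdges

/-- `(W, w)` is glued from `(V₀, w₀)` and `(V₁, w₁)` by identifying `e₀ v₀ = e₁ v₁`, with no edges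
between the two sides; `r₀` retracts `W` onto `V₀` by collapsing the other side to `v₀`. -/
structure IsOnePointUnion {W V₀ V₁ : Type*} (w : W → W → ℝ) (w₀ : V₀ → V₀ → ℝ)
    (w₁ : V₁ → V₁ → ℝ) (e₀ : V₀ → W) (e₁ : V₁ → W) (r₀ : W → V₀) (r₁ : W → V₁)
    (v₀ : V₀) (v₁ : V₁) : Prop where
  glue : e₀ v₀ = e₁ v₁
  retract₀ : ∀ a, r₀ (e₀ a) = a
  retract₁ : ∀ b, r₁ (e₁ b) = b
  collapse₀ : ∀ b, r₀ (e₁ b) = v₀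
  collapse₁ : ∀ a, r₁ (e₀ a) = v₁
  cover : ∀ P, P ∈ Set.range e₀ ∨ P ∈ Set.range e₁
  weight₀ : ∀ a a', a ≠ a' → w (e₀ a) (e₀ a') = w₀ a a'
  weight₁ : ∀ b b', b ≠ b' → w (e₁ b) (e₁ b') = w₁ b b'
  weight₀₁ : ∀ a b, a ≠ v₀ → b ≠ v₁ → w (e₀ a) (e₁ b) = 0
  weight₁₀ : ∀ a b, a ≠ v₀ → b ≠ v₁ → w (e₁ b) (e₀ a) = 0

namespace IsOnePointUnion

variable {W V₀ V₁ : Type*} {w : W → W → ℝ} {w₀ : V₀ → V₀ → ℝ} {w₁ : V₁ → V₁ → ℝ}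
  {e₀ : V₀ → W} {e₁ : V₁ → W} {r₀ : W → V₀} {r₁ : W → V₁} {v₀ : V₀} {v₁ : V₁}
  (hG : IsOnePointUnion w w₀ w₁ e₀ e₁ r₀ r₁ v₀ v₁)
include hG

lemma symm : IsOnePointUnion w w₁ w₀ e₁ e₀ r₁ r₀ v₁ v₀ :=
  ⟨hG.glue.symm, hG.retract₁, hG.retract₀, hG.collapse₁, hG.collapse₀, fun P => (hG.cover P).symm,
    hG.weight₁, hG.weight₀, fun b a hb ha => hG.weight₁₀ a b ha hb,
    fun b a hb ha => hG.weight₀₁ a b ha hb⟩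

lemma injective_e₀ : Injective e₀ :=
  LeftInverse.injective hG.retract₀

lemma surjective_r₀ : Surjective r₀ :=
  LeftInverse.surjective hG.retract₀

lemma eq_of_e₀_eq_e₁ {a : V₀} {b : V₁} (h : e₀ a = e₁ b) : a = v₀ :=
  (hG.retract₀ a).symm.trans (h ▸ hG.collapse₀ b)

lemma eq_extendEdges_add {F : W × W → ℝ} (hdiag : ∀ P, F (P, P) = 0)
    (hcross : ∀ a b, a ≠ v₀ → b ≠ v₁ → F (e₀ a, e₁ b) = 0 ∧ F (e₁ b, e₀ a) = 0) :
    F = extendEdges e₀ (F ∘ Prod.map e₀ e₀) + extendEdges e₁ (F ∘ Prod.map e₁ e₁) := by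
  rw [extendEdges_comp_map hG.injective_e₀, extendEdges_comp_map hG.symm.injective_e₀,
    ← Set.indicator_union_add_inter]
  have hinter : ((Set.range e₀ ×ˢ Set.range e₀) ∩ (Set.range e₁ ×ˢ Set.range e₁)).indicator F
      = 0 := by
    ext ⟨P, Q⟩
    refine Set.indicator_apply_eq_zero.mpr ?_
    rintro ⟨⟨⟨a, rfl⟩, ⟨a', rfl⟩⟩, ⟨b, hb⟩, ⟨b', hb'⟩⟩
    rw [hG.eq_of_e₀_eq_e₁ hb.symm, hG.eq_of_e₀_eq_e₁ hb'.symm]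
    exact hdiag _
  have hunion : ((Set.range e₀ ×ˢ Set.range e₀) ∪ (Set.range e₁ ×ˢ Set.range e₁)).indicator F
      = F := by
    refine Set.indicator_eq_self.mpr fun ⟨P, Q⟩ hPQ => ?_
    rcases hG.cover P with ⟨a, rfl⟩ | ⟨b, rfl⟩ <;> rcases hG.cover Q with ⟨a', rfl⟩ | ⟨b', rfl⟩
    · exact Or.inl ⟨⟨a, rfl⟩, ⟨a', rfl⟩⟩
    · by_cases ha : a = v₀
      · exact Or.inr ⟨⟨v₁, ha ▸ hG.glue.symm⟩, ⟨b', rfl⟩⟩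
      by_cases hb : b' = v₁
      · exact Or.inl ⟨⟨a, rfl⟩, ⟨v₀, hb ▸ hG.glue⟩⟩
      exact absurd (hcross a b' ha hb).1 hPQ
    · by_cases ha : a' = v₀
      · exact Or.inr ⟨⟨b, rfl⟩, ⟨v₁, ha ▸ hG.glue.symm⟩⟩
      by_cases hb : b = v₁
      · exact Or.inl ⟨⟨v₀, hb ▸ hG.glue⟩, ⟨a', rfl⟩⟩
      exact absurd (hcross a' b ha hb).2 hPQ
    · exact Or.inr ⟨⟨b, rfl⟩, ⟨b', rfl⟩⟩
  rw [hunion, hinter, add_zero]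

lemma cutFun_eq_add [DecidableEq W] [Fintype V₀] [DecidableEq V₀] [Fintype V₁] [DecidableEq V₁]
    (h : ℝ → ℝ) (h0 : h 0 = 0) (Y : Finset W) :
    cutFun h w Y = extendEdges e₀ (cutFun h w₀ (comapShore e₀ Y))
      + extendEdges e₁ (cutFun h w₁ (comapShore e₁ Y)) := by
  rw [← cutFun_comp_map h hG.weight₀, ← cutFun_comp_map h hG.weight₁]
  refine hG.eq_extendEdges_add (cutFun_diag h w Y) fun a b ha hb => ?_
  simp [cutFun, hG.weight₀₁ a b ha hb, hG.weight₁₀ a b ha hb, h0]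

lemma comapShore_comapShore_retract₀ [Fintype W] [DecidableEq W] [Fintype V₀] [DecidableEq V₀]
    (X : Finset V₀) : comapShore e₀ (comapShore r₀ X) = X := by
  rw [comapShore_comapShore, show r₀ ∘ e₀ = id from funext hG.retract₀, comapShore_id]

lemma comapShore_comapShore_collapse₀ [Fintype W] [DecidableEq W] [DecidableEq V₀] [Fintype V₁]
    (X : Finset V₀) :
    comapShore e₁ (comapShore r₀ X) = ∅ ∨ comapShore e₁ (comapShore r₀ X) = univ := by
  rw [comapShore_comapShore, show r₀ ∘ e₁ = fun _ => v₀ from funext hG.collapse₀]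
  exact comapShore_const v₀ X

/-- Split at whether the glued vertex lies in `Y`: a vertex on the other side of the cut then
lies in a part on which `Y` induces a proper cut. -/
lemma isCutShore_comapShore_or [Fintype W] [DecidableEq W] [Fintype V₀] [Fintype V₁]
    {Y : Finset W} (hY : isCutShore Y) :
    isCutShore (comapShore e₀ Y) ∨ isCutShore (comapShore e₁ Y) := by
  by_cases hg : e₀ v₀ ∈ Y
  · obtain ⟨Q, hQ⟩ : ∃ Q, Q ∉ Y := by
      by_contra! h
      exact hY.2 (eq_univ_of_forall h)
    rcases hG.cover Q with ⟨a, rfl⟩ | ⟨b, rfl⟩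
    · exact Or.inl (isCutShore_comapShore_of_mem_of_notMem hg hQ)
    · exact Or.inr (isCutShore_comapShore_of_mem_of_notMem (hG.glue ▸ hg) hQ)
  · obtain ⟨P, hP⟩ := hY.1
    rcases hG.cover P with ⟨a, rfl⟩ | ⟨b, rfl⟩
    · exact Or.inl (isCutShore_comapShore_of_mem_of_notMem hP hg)
    · exact Or.inr (isCutShore_comapShore_of_mem_of_notMem hP (hG.glue ▸ hg))

lemma extendEdges_apply_eq_zero_of_diag {f : V₀ × V₀ → ℝ} (hf : ∀ a, f (a, a) = 0) (b b' : V₁) :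
    extendEdges e₀ f (e₁ b, e₁ b') = 0 := by
  by_cases h : (e₁ b, e₁ b') ∈ Set.range e₀ ×ˢ Set.range e₀
  · obtain ⟨⟨a, ha : e₀ a = e₁ b⟩, ⟨a', ha' : e₀ a' = e₁ b'⟩⟩ := h
    rw [← ha, ← ha', extendEdges_apply_map hG.injective_e₀, hG.eq_of_e₀_eq_e₁ ha,
      hG.eq_of_e₀_eq_e₁ ha', hf]
  · exact extendEdges_apply_of_notMem f h

lemma disjoint_map_minCutSpan [Fintype V₀] [DecidableEq V₀] [Fintype V₁] [DecidableEq V₁] :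
    Disjoint ((minCutSpan w₀).map (extendEdges e₀)) ((minCutSpan w₁).map (extendEdges e₁)) := by
  rw [Submodule.disjoint_def]
  rintro _ ⟨f, hf, rfl⟩ ⟨g, -, hfg⟩
  ext ⟨P, Q⟩
  by_cases hPQ : (P, Q) ∈ Set.range e₁ ×ˢ Set.range e₁
  · obtain ⟨⟨b, rfl⟩, ⟨b', rfl⟩⟩ := hPQ
    exact hG.extendEdges_apply_eq_zero_of_diag (apply_diag_eq_zero_of_mem_minCutSpan hf) b b'
  · rw [← hfg]
    exact extendEdges_apply_of_notMem g hPQ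

variable [Fintype W] [DecidableEq W] [Fintype V₀] [DecidableEq V₀] [Fintype V₁] [DecidableEq V₁]

lemma cutVec_eq_add (Y : Finset W) :
    cutVec w Y = extendEdges e₀ (cutVec w₀ (comapShore e₀ Y))
      + extendEdges e₁ (cutVec w₁ (comapShore e₁ Y)) := by
  simp only [cutVec_eq_cutFun]
  exact hG.cutFun_eq_add _ (by simp) Y

lemma cutWeight_eq_add (Y : Finset W) :
    cutWeight w Y = cutWeight w₀ (comapShore e₀ Y) + cutWeight w₁ (comapShore e₁ Y) := by
  simp only [cutWeight_eq_sum_cutFun, hG.cutFun_eq_add id rfl Y, Pi.add_apply,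
    Finset.sum_add_distrib, sum_extendEdges hG.injective_e₀, sum_extendEdges hG.symm.injective_e₀]
  ring

lemma cutWeight_comapShore_retract₀ (X : Finset V₀) :
    cutWeight w (comapShore r₀ X) = cutWeight w₀ X := by
  rw [hG.cutWeight_eq_add, hG.comapShore_comapShore_retract₀,
    cutWeight_of_eq_empty_or_eq_univ w₁ (hG.comapShore_comapShore_collapse₀ X), add_zero]

lemma cutVec_comapShore_retract₀ (X : Finset V₀) :
    cutVec w (comapShore r₀ X) = extendEdges e₀ (cutVec w₀ X) := by
  rw [hG.cutVec_eq_add, hG.comapShore_comapShore_retract₀,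
    cutVec_of_eq_empty_or_eq_univ w₁ (hG.comapShore_comapShore_collapse₀ X), map_zero, add_zero]

lemma cutWeights_subset : cutWeights w₀ ⊆ cutWeights w := by
  rintro _ ⟨X, hX, rfl⟩
  exact ⟨comapShore r₀ X, isCutShore_comapShore hG.surjective_r₀ hX,
    hG.cutWeight_comapShore_retract₀ X⟩

variable {c₀ c₁ : ℝ} (hnn₀ : ∀ i j, 0 ≤ w₀ i j) (hnn₁ : ∀ i j, 0 ≤ w₁ i j)
  (hc₀ : IsLeast (cutWeights w₀) c₀) (hc₁ : IsLeast (cutWeights w₁) c₁)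
include hnn₀ hnn₁ hc₀ hc₁

lemma isLeast_cutWeights : IsLeast (cutWeights w) (min c₀ c₁) := by
  refine ⟨?_, ?_⟩
  · rcases min_choice c₀ c₁ with h | h <;> rw [h]
    exacts [hG.cutWeights_subset hc₀.1, hG.symm.cutWeights_subset hc₁.1]
  · rintro _ ⟨Y, hY, rfl⟩
    have h₀ := cutWeight_nonneg hnn₀ (comapShore e₀ Y)
    have h₁ := cutWeight_nonneg hnn₁ (comapShore e₁ Y)
    rw [hG.cutWeight_eq_add]
    rcases hG.isCutShore_comapShore_or hY with hA | hB
    · linarith [hc₀.2 ⟨_, hA, rfl⟩, min_le_left c₀ c₁]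
    · linarith [hc₁.2 ⟨_, hB, rfl⟩, min_le_right c₀ c₁]

lemma cutVec_comapShore_eq_zero_or {Y : Finset W} (hY : isMinCut w Y) :
    cutVec w₀ (comapShore e₀ Y) = 0 ∨ (isMinCut w₀ (comapShore e₀ Y) ∧ c₀ ≤ c₁) := by
  rcases eq_empty_or_eq_univ_or_isCutShore (comapShore e₀ Y) with h | h | hA
  · exact Or.inl (cutVec_of_eq_empty_or_eq_univ w₀ (Or.inl h))
  · exact Or.inl (cutVec_of_eq_empty_or_eq_univ w₀ (Or.inr h))
  have hY' := ((isMinCut_iff_of_isLeast (hG.isLeast_cutWeights hnn₀ hnn₁ hc₀ hc₁) Y).mp hY).2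
  rw [hG.cutWeight_eq_add] at hY'
  have h₀ := hc₀.2 ⟨_, hA, rfl⟩
  have h₁ := cutWeight_nonneg hnn₁ (comapShore e₁ Y)
  have := min_le_left c₀ c₁
  have := min_le_right c₀ c₁
  exact Or.inr ⟨(isMinCut_iff_of_isLeast hc₀ _).mpr ⟨hA, by linarith⟩, by linarith⟩

lemma cutVec_comapShore_mem_minCutSpan {Y : Finset W} (hY : isMinCut w Y) :
    cutVec w₀ (comapShore e₀ Y) ∈ minCutSpan w₀ := by
  rcases hG.cutVec_comapShore_eq_zero_or hnn₀ hnn₁ hc₀ hc₁ hY with h | h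
  · exact h ▸ zero_mem _
  · exact cutVec_mem_minCutSpan h.1

lemma minCutSpan_le_sup :
    minCutSpan w ≤ (minCutSpan w₀).map (extendEdges e₀) ⊔ (minCutSpan w₁).map (extendEdges e₁) := by
  refine Submodule.span_le.mpr ?_
  rintro _ ⟨Y, hY, rfl⟩
  rw [hG.cutVec_eq_add]
  exact Submodule.add_mem_sup
    (Submodule.mem_map_of_mem (hG.cutVec_comapShore_mem_minCutSpan hnn₀ hnn₁ hc₀ hc₁ hY))
    (Submodule.mem_map_of_mem (hG.symm.cutVec_comapShore_mem_minCutSpan hnn₁ hnn₀ hc₁ hc₀ hY))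

lemma minCutSpan_le_map₀ (h : c₀ < c₁) : minCutSpan w ≤ (minCutSpan w₀).map (extendEdges e₀) := by
  refine Submodule.span_le.mpr ?_
  rintro _ ⟨Y, hY, rfl⟩
  have hB : cutVec w₁ (comapShore e₁ Y) = 0 :=
    (hG.symm.cutVec_comapShore_eq_zero_or hnn₁ hnn₀ hc₁ hc₀ hY).resolve_right
      fun h' => h.not_ge h'.2
  rw [hG.cutVec_eq_add, hB, map_zero, add_zero]
  exact Submodule.mem_map_of_mem (hG.cutVec_comapShore_mem_minCutSpan hnn₀ hnn₁ hc₀ hc₁ hY)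

lemma map₀_le_minCutSpan (h : c₀ ≤ c₁) : (minCutSpan w₀).map (extendEdges e₀) ≤ minCutSpan w := by
  rw [minCutSpan, Submodule.map_span, Submodule.span_le]
  rintro _ ⟨_, ⟨X, hX, rfl⟩, rfl⟩
  rw [← hG.cutVec_comapShore_retract₀]
  refine cutVec_mem_minCutSpan ((isMinCut_iff_of_isLeast (hG.isLeast_cutWeights hnn₀ hnn₁ hc₀ hc₁)
    _).mpr ⟨isCutShore_comapShore hG.surjective_r₀ hX.1, ?_⟩)
  rw [hG.cutWeight_comapShore_retract₀, min_eq_left h]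
  exact ((isMinCut_iff_of_isLeast hc₀ X).mp hX).2

lemma cdim_eq_left (h : c₀ < c₁) : cdim w = cdim w₀ := by
  rw [cdim_eq_finrank_minCutSpan, cdim_eq_finrank_minCutSpan,
    le_antisymm (hG.minCutSpan_le_map₀ hnn₀ hnn₁ hc₀ hc₁ h)
      (hG.map₀_le_minCutSpan hnn₀ hnn₁ hc₀ hc₁ h.le),
    finrank_map_extendEdges hG.injective_e₀]

lemma cdim_eq_add (h : c₀ = c₁) : cdim w = cdim w₀ + cdim w₁ := by
  have hspan := le_antisymm (hG.minCutSpan_le_sup hnn₀ hnn₁ hc₀ hc₁)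
    (sup_le (hG.map₀_le_minCutSpan hnn₀ hnn₁ hc₀ hc₁ h.le)
      (hG.symm.map₀_le_minCutSpan hnn₁ hnn₀ hc₁ hc₀ h.ge))
  have hrank := Submodule.finrank_sup_add_finrank_inf_eq
    ((minCutSpan w₀).map (extendEdges e₀)) ((minCutSpan w₁).map (extendEdges e₁))
  rw [disjoint_iff.mp hG.disjoint_map_minCutSpan, finrank_bot, add_zero,
    finrank_map_extendEdges hG.injective_e₀, finrank_map_extendEdges hG.symm.injective_e₀] at hrank
  rw [cdim_eq_finrank_minCutSpan, hspan, hrank]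
  rfl

end IsOnePointUnion

section DirectUnion

variable {V₀ V₁ : Type*} [DecidableEq V₀] [DecidableEq V₁] (v₀ : V₀) (v₁ : V₁)

def duEmbed₀ (a : V₀) : duVertex V₀ V₁ v₀ v₁ :=
  if h : a = v₀ then none else some (.inl ⟨a, h⟩)

def duEmbed₁ (b : V₁) : duVertex V₀ V₁ v₀ v₁ :=
  if h : b = v₁ then none else some (.inr ⟨b, h⟩)

def duRetract₀ : duVertex V₀ V₁ v₀ v₁ → V₀
  | some (.inl x) => x
  | _ => v₀

def duRetract₁ : duVertex V₀ V₁ v₀ v₁ → V₁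
  | some (.inr y) => y
  | _ => v₁

lemma isOnePointUnion_duWeight (w₀ : V₀ → V₀ → ℝ) (w₁ : V₁ → V₁ → ℝ) :
    IsOnePointUnion (duWeight w₀ w₁ v₀ v₁) w₀ w₁ (duEmbed₀ v₀ v₁) (duEmbed₁ v₀ v₁)
      (duRetract₀ v₀ v₁) (duRetract₁ v₀ v₁) v₀ v₁ where
  glue := by simp [duEmbed₀, duEmbed₁]
  retract₀ a := by by_cases h : a = v₀ <;> simp [duEmbed₀, duRetract₀, h]
  retract₁ b := by by_cases h : b = v₁ <;> simp [duEmbed₁, duRetract₁, h]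
  collapse₀ b := by by_cases h : b = v₁ <;> simp [duEmbed₁, duRetract₀, h]
  collapse₁ a := by by_cases h : a = v₀ <;> simp [duEmbed₀, duRetract₁, h]
  cover
    | none => Or.inl ⟨v₀, by simp [duEmbed₀]⟩
    | some (.inl x) => Or.inl ⟨x, by simp [duEmbed₀, x.2]⟩
    | some (.inr y) => Or.inr ⟨y, by simp [duEmbed₁, y.2]⟩
  weight₀ a a' h := by
    by_cases ha : a = v₀ <;> by_cases ha' : a' = v₀
    · exact absurd (ha.trans ha'.symm) h
    all_goals simp [duEmbed₀, duWeight, ha, ha']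
  weight₁ b b' h := by
    by_cases hb : b = v₁ <;> by_cases hb' : b' = v₁
    · exact absurd (hb.trans hb'.symm) h
    all_goals simp [duEmbed₁, duWeight, hb, hb']
  weight₀₁ a b ha hb := by simp [duEmbed₀, duEmbed₁, duWeight, ha, hb]
  weight₁₀ a b ha hb := by simp [duEmbed₀, duEmbed₁, duWeight, ha, hb]

end DirectUnion

theorem stmt6_general {V₀ V₁ : Type*} [DecidableEq V₀] [Fintype V₀] [DecidableEq V₁] [Fintype V₁]
    (w₀ : V₀ → V₀ → ℝ) (w₁ : V₁ → V₁ → ℝ) (v₀ : V₀) (v₁ : V₁)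
    (hnn₀ : ∀ i j, 0 ≤ w₀ i j)
    (hnn₁ : ∀ i j, 0 ≤ w₁ i j)
    (c₀ c₁ : ℝ)
    (hc₀ : IsLeast {c | ∃ X : Finset V₀, isCutShore X ∧ cutWeight w₀ X = c} c₀)
    (hc₁ : IsLeast {c | ∃ X : Finset V₁, isCutShore X ∧ cutWeight w₁ X = c} c₁) :
    (c₀ = c₁ → cdim (duWeight w₀ w₁ v₀ v₁) = cdim w₀ + cdim w₁) ∧
    (c₀ < c₁ → cdim (duWeight w₀ w₁ v₀ v₁) = cdim w₀) ∧
    (c₁ < c₀ → cdim (duWeight w₀ w₁ v₀ v₁) = cdim w₁) := by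
  have hG := isOnePointUnion_duWeight v₀ v₁ w₀ w₁
  exact ⟨hG.cdim_eq_add hnn₀ hnn₁ hc₀ hc₁, hG.cdim_eq_left hnn₀ hnn₁ hc₀ hc₁,
    hG.symm.cdim_eq_left hnn₁ hnn₀ hc₁ hc₀⟩

/-- Cut dimension of a direct union: if the two minimum cut weights agree it is the sum of
the cut dimensions, and otherwise it equals the cut dimension of the lighter part. -/
theorem stmt6 {V₀ V₁ : Type*} [DecidableEq V₀] [Fintype V₀] [DecidableEq V₁] [Fintype V₁]
    (w₀ : V₀ → V₀ → ℝ) (w₁ : V₁ → V₁ → ℝ) (v₀ : V₀) (v₁ : V₁)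
    (hsym₀ : ∀ i j, w₀ i j = w₀ j i) (hnn₀ : ∀ i j, 0 ≤ w₀ i j)
    (hsym₁ : ∀ i j, w₁ i j = w₁ j i) (hnn₁ : ∀ i j, 0 ≤ w₁ i j)
    (c₀ c₁ : ℝ)
    (hc₀ : IsLeast {c | ∃ X : Finset V₀, isCutShore X ∧ cutWeight w₀ X = c} c₀)
    (hc₁ : IsLeast {c | ∃ X : Finset V₁, isCutShore X ∧ cutWeight w₁ X = c} c₁) :
    (c₀ = c₁ → cdim (duWeight w₀ w₁ v₀ v₁) = cdim w₀ + cdim w₁) ∧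
    (c₀ < c₁ → cdim (duWeight w₀ w₁ v₀ v₁) = cdim w₀) ∧
    (c₁ < c₀ → cdim (duWeight w₀ w₁ v₀ v₁) = cdim w₁) :=
  stmt6_general w₀ w₁ v₀ v₁ hnn₀ hnn₁ c₀ c₁ hc₀ hc₁
end

section
/- Let G = ([n], w) be a complete weighted graph (w strictly positive on all pairs) and let ℒ be a cross-free family of cuts of G. Then the characteristic vectors {χ(S) : S ∈ ℒ} ⊆ {0,1}^{C(n,2)} are linearly independent. -/
/-!
Fix a vertex `r` and replace every shore containing `r` by its complement: this does not change
the cuts, and turns a cross-free family into a laminar family of nonempty sets avoiding `r`.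
If `∑ c_X χ(Δ(X)) = 0`, reading this identity at the edges `ur` gives `∑_{X ∋ u} c_X = 0`, and
then at the edges `uv` gives `∑_{X ∋ u, v} c_X = 0`. In a laminar family, the members containing
a given member `X` are exactly those containing some one or two points of `X`, so
`∑_{Y ⊇ X} c_Y = 0` for every `X`, and induction downwards along `⊋` yields `c = 0`.
-/

open Finset

variable {V ι M : Type*}

def IsLaminar (A : ι → Finset V) : Prop :=
  ∀ i j, A i ⊆ A j ∨ A j ⊆ A i ∨ Disjoint (A i) (A j)

namespace IsLaminar

variable {A : ι → Finset V}

lemma subset_or_subset_of_mem (hA : IsLaminar A) {u : V} {i j : ι} (hi : u ∈ A i)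
    (hj : u ∈ A j) : A i ⊆ A j ∨ A j ⊆ A i :=
  (hA i j).imp_right (Or.resolve_right · (not_disjoint_iff.2 ⟨u, hi, hj⟩))

variable [DecidableEq V]

lemma exists_pair_forall_mem_iff_subset [Fintype ι] (hA : IsLaminar A) {j : ι}
    (hj : (A j).Nonempty) : ∃ u v, ∀ i, u ∈ A i ∧ v ∈ A i ↔ A j ⊆ A i := by
  obtain ⟨u, hu⟩ := hj
  set S : Finset ι := {i | u ∈ A i ∧ ¬A j ⊆ A i}
  rcases S.eq_empty_or_nonempty with hS | hS
  · refine ⟨u, u, fun i => ⟨fun ⟨hui, _⟩ => ?_, fun h => ⟨h hu, h hu⟩⟩⟩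
    by_contra hji
    exact eq_empty_iff_forall_notMem.1 hS i (by simp [S, hui, hji])
  -- `A k` is a largest member through `u` not containing `A j`; a point of `A j \ A k`
  -- then rules out every member through `u` strictly below `A j`.
  obtain ⟨k, hkS, hkmax⟩ := S.exists_max_image (fun i => #(A i)) hS
  obtain ⟨huk, hjk⟩ : u ∈ A k ∧ ¬A j ⊆ A k := by simpa [S] using hkS
  have hkj : A k ⊂ A j :=
    ((hA.subset_or_subset_of_mem huk hu).resolve_right hjk).ssubset_of_not_subset hjk
  obtain ⟨v, hvj, hvk⟩ := exists_of_ssubset hkj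
  refine ⟨u, v, fun i => ⟨fun ⟨hui, hvi⟩ => ?_, fun h => ⟨h hu, h hvj⟩⟩⟩
  by_contra hji
  have hki : A k ⊂ A i := by
    rcases hA.subset_or_subset_of_mem huk hui with h | h
    · exact h.ssubset_of_not_subset fun h' => hvk (h' hvi)
    · exact absurd (h hvi) hvk
  exact (hkmax i (by simp [S, hui, hji])).not_gt (card_lt_card hki)

lemma sum_superset_eq_zero [Fintype ι] [AddCommMonoid M] (hA : IsLaminar A)
    (hne : ∀ i, (A i).Nonempty) {c : ι → M}
    (hc : ∀ u v, ∑ i with u ∈ A i ∧ v ∈ A i, c i = 0) (j : ι) :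
    ∑ i with A j ⊆ A i, c i = 0 := by
  obtain ⟨u, v, huv⟩ := hA.exists_pair_forall_mem_iff_subset (hne j)
  simpa only [huv] using hc u v

end IsLaminar

variable [DecidableEq V]

lemma eq_zero_of_sum_superset_eq_zero [Fintype ι] [AddCommMonoid M] {A : ι → Finset V}
    (hA : Function.Injective A) {c : ι → M} (hc : ∀ j, ∑ i with A j ⊆ A i, c i = 0) (j : ι) :
    c j = 0 := by
  classical
  induction j using (Finite.wellFounded_of_trans_of_irrefl fun i j => A j ⊂ A i).induction with
  | _ j ih =>
  have hsplit : ∑ i with A j ⊆ A i, c i = c j + ∑ i with A j ⊂ A i, c i := by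
    rw [← add_sum_erase _ _ (mem_filter.2 ⟨mem_univ j, Subset.rfl⟩)]
    congr 2
    ext i
    simp [ssubset_iff_subset_ne, hA.ne_iff, eq_comm, and_comm]
  rwa [sum_eq_zero fun i hi => ih i (mem_filter.1 hi).2, add_zero, hc, eq_comm] at hsplit

lemma sum_mem_and_mem_eq_zero [Fintype ι] [AddCommGroup M] [IsAddTorsionFree M]
    {A : ι → Finset V} {r : V} (hr : ∀ i, r ∉ A i) {c : ι → M}
    (hc : ∀ u v, u ≠ v → ∑ i with ¬(u ∈ A i ↔ v ∈ A i), c i = 0) (u v : V) :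
    ∑ i with u ∈ A i ∧ v ∈ A i, c i = 0 := by
  have hvertex : ∀ u, ∑ i with u ∈ A i, c i = 0 := by
    intro u
    rcases eq_or_ne u r with rfl | hu
    · simp [hr]
    · simpa [hr] using hc u r hu
  rcases eq_or_ne u v with rfl | huv
  · simpa using hvertex u
  have hincl_excl : ∑ i with ¬(u ∈ A i ↔ v ∈ A i), c i + 2 • ∑ i with u ∈ A i ∧ v ∈ A i, c i
      = ∑ i with u ∈ A i, c i + ∑ i with v ∈ A i, c i := by
    simp only [sum_filter, smul_sum, ← sum_add_distrib]
    refine sum_congr rfl fun i _ => ?_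
    by_cases hui : u ∈ A i <;> by_cases hvi : v ∈ A i <;> simp [hui, hvi, two_nsmul]
  rwa [hc u v huv, hvertex, hvertex, zero_add, add_zero, two_nsmul_eq_zero] at hincl_excl

section Cuts

variable [Fintype V]

lemma cutVec_compl (w : V → V → ℝ) (X : Finset V) : cutVec w Xᶜ = cutVec w X := by
  funext p
  refine if_congr ?_ rfl rfl
  simp only [mem_compl, not_not]
  tauto

lemma cutVec_apply_of_pos {w : V → V → ℝ} {u v : V} (huv : 0 < w u v) (X : Finset V) :
    cutVec w X (u, v) = if (u ∈ X ↔ v ∈ X) then 0 else 1 := by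
  by_cases hu : u ∈ X <;> by_cases hv : v ∈ X <;> simp [cutVec, hu, hv, huv]

theorem linearIndependent_cutVec_of_isLaminar [Fintype ι] {w : V → V → ℝ}
    (hpos : ∀ u v, u ≠ v → 0 < w u v) {A : ι → Finset V} (hinj : Function.Injective A)
    (hne : ∀ i, (A i).Nonempty) {r : V} (hr : ∀ i, r ∉ A i) (hA : IsLaminar A) :
    LinearIndependent ℝ fun i => cutVec w (A i) := by
  rw [Fintype.linearIndependent_iff]
  intro c hc
  have hsep : ∀ u v, u ≠ v → ∑ i with ¬(u ∈ A i ↔ v ∈ A i), c i = 0 := by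
    intro u v huv
    simpa [sum_filter, cutVec_apply_of_pos (hpos u v huv)] using congrFun hc (u, v)
  exact eq_zero_of_sum_superset_eq_zero hinj
    (hA.sum_superset_eq_zero hne (sum_mem_and_mem_eq_zero hr hsep))

lemma crossing_compl_left (X Y : Finset V) : crossing Xᶜ Y ↔ crossing X Y := by
  simp only [crossing, Finset.Nonempty, mem_inter, mem_sdiff, mem_compl, not_not]
  tauto

lemma crossing_comm (X Y : Finset V) : crossing X Y ↔ crossing Y X := by
  simp only [crossing, inter_comm]
  tauto

lemma crossing_compl_right (X Y : Finset V) : crossing X Yᶜ ↔ crossing X Y := by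
  rw [crossing_comm, crossing_compl_left, crossing_comm]

lemma subset_or_subset_or_disjoint_of_not_crossing {X Y : Finset V} (h : ¬crossing X Y)
    {r : V} (hX : r ∉ X) (hY : r ∉ Y) : X ⊆ Y ∨ Y ⊆ X ∨ Disjoint X Y := by
  by_contra! hlam
  obtain ⟨hXY, hYX, hdisj⟩ := hlam
  exact h ⟨not_disjoint_iff_nonempty_inter.1 hdisj, sdiff_nonempty.2 hXY, sdiff_nonempty.2 hYX,
    r, by simp [hX, hY]⟩

def shoreAvoiding (r : V) (X : Finset V) : Finset V :=
  if r ∈ X then Xᶜ else X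

lemma notMem_shoreAvoiding (r : V) (X : Finset V) : r ∉ shoreAvoiding r X := by
  unfold shoreAvoiding
  split_ifs with h <;> simp [h]

lemma cutVec_shoreAvoiding (w : V → V → ℝ) (r : V) (X : Finset V) :
    cutVec w (shoreAvoiding r X) = cutVec w X := by
  unfold shoreAvoiding
  split_ifs
  exacts [cutVec_compl w X, rfl]

lemma crossing_shoreAvoiding (r : V) (X Y : Finset V) :
    crossing (shoreAvoiding r X) (shoreAvoiding r Y) ↔ crossing X Y := by
  unfold shoreAvoiding
  split_ifs <;> simp only [crossing_compl_left, crossing_compl_right]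

lemma shoreAvoiding_nonempty {r : V} {X : Finset V} (hX : X.Nonempty) (hX' : X ≠ univ) :
    (shoreAvoiding r X).Nonempty := by
  unfold shoreAvoiding
  split_ifs
  exacts [by simpa [nonempty_iff_ne_empty] using hX', hX]

lemma eq_or_eq_compl_of_shoreAvoiding_eq {r : V} {X Y : Finset V}
    (h : shoreAvoiding r X = shoreAvoiding r Y) : X = Y ∨ Y = Xᶜ := by
  unfold shoreAvoiding at h
  split_ifs at h with hX hY hY
  exacts [.inl (compl_injective h), .inr h.symm, .inr (by rw [h, compl_compl]), .inl h]

end Cuts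

theorem stmt8_general (n : ℕ) (w : Fin n → Fin n → ℝ)
    (hpos : ∀ i j, i ≠ j → 0 < w i j)
    (L : Finset (Finset (Fin n)))
    (hshore : ∀ X ∈ L, X.Nonempty ∧ X ≠ Finset.univ)
    (hdist : ∀ X ∈ L, ∀ Y ∈ L, X ≠ Y → Y ≠ Xᶜ)
    (hcrossfree : ∀ X ∈ L, ∀ Y ∈ L, ¬ crossing X Y) :
    LinearIndependent ℝ (fun X : {X // X ∈ L} => cutVec w X.1) := by
  rcases isEmpty_or_nonempty {X // X ∈ L} with hL | ⟨⟨X₀, hX₀⟩⟩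
  · exact linearIndependent_empty_type
  obtain ⟨r, -⟩ := (hshore X₀ hX₀).1
  have hinj : Function.Injective fun X : {X // X ∈ L} => shoreAvoiding r X.1 := by
    intro X Y h
    by_contra hXY
    have hne : X.1 ≠ Y.1 := fun h' => hXY (Subtype.ext h')
    exact (eq_or_eq_compl_of_shoreAvoiding_eq h).elim hne (hdist X.1 X.2 Y.1 Y.2 hne)
  have hlam : IsLaminar fun X : {X // X ∈ L} => shoreAvoiding r X.1 := fun X Y =>
    subset_or_subset_or_disjoint_of_not_crossing
      ((crossing_shoreAvoiding r X.1 Y.1).not.2 (hcrossfree X.1 X.2 Y.1 Y.2))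
      (notMem_shoreAvoiding r X.1) (notMem_shoreAvoiding r Y.1)
  simpa only [cutVec_shoreAvoiding] using
    linearIndependent_cutVec_of_isLaminar hpos hinj
      (fun X => shoreAvoiding_nonempty (hshore X.1 X.2).1 (hshore X.1 X.2).2)
      (fun X => notMem_shoreAvoiding r X.1) hlam

/-- In a complete weighted graph, the characteristic vectors of the cuts of a cross-free
family of (distinct) cuts are linearly independent. -/
theorem stmt8 (n : ℕ) (w : Fin n → Fin n → ℝ)
    (hsym : ∀ i j, w i j = w j i) (hpos : ∀ i j, i ≠ j → 0 < w i j)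
    (L : Finset (Finset (Fin n)))
    (hshore : ∀ X ∈ L, X.Nonempty ∧ X ≠ Finset.univ)
    (hdist : ∀ X ∈ L, ∀ Y ∈ L, X ≠ Y → Y ≠ Xᶜ)
    (hcrossfree : ∀ X ∈ L, ∀ Y ∈ L, ¬ crossing X Y) :
    LinearIndependent ℝ (fun X : {X // X ∈ L} => cutVec w X.1) :=
  stmt8_general n w hpos L hshore hdist hcrossfree
end
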